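/- arXiv:1501.01391 — 6 statements merged into one kernel-verified Lean document; each statement's English description precedes it below -/
import Mathlib

section
/- The function h_d defined on edge subsets F of a coloured graph by h_d(F) = min{k(F), |V(F)| - (d+1)} is submodular: for all X, Y ⊆ E, h_d(X) + h_d(Y) ≥ h_d(X ∪ Y) + h_d(X ∩ Y). -/
open Finset

attribute [local instance] Classical.propDecidable

noncomputable section

variable {V C : Type*}

/-- The set of vertices spanned by an edge set. -/
def eVerts [Fintype V] [DecidableEq V] (F : Finset (Sym2 V)) : Finset V :=
  Finset.univ.filter fun v => ∃ e ∈ F, v ∈ e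

/-- The set of colours appearing on the vertices spanned by an edge set. -/
def eCols [Fintype V] [DecidableEq V] [DecidableEq C] (χ : V → Option C)
    (F : Finset (Sym2 V)) : Finset C :=
  (eVerts F).biUnion fun v => (χ v).toFinset

/-- The number of colours appearing on the vertices spanned by an edge set. -/
def kCount [Fintype V] [DecidableEq V] [DecidableEq C] (χ : V → Option C)
    (F : Finset (Sym2 V)) : ℤ :=
  (eCols χ F).card

/-- The set of all colours used by the colouring. -/
def usedCols [Fintype V] [DecidableEq C] (χ : V → Option C) : Finset C :=
  Finset.univ.biUnion fun v => (χ v).toFinset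

/-- The number of connected components of the graph `(V(F), F)`. -/
def omegaCount [Fintype V] [DecidableEq V] (F : Finset (Sym2 V)) : ℤ :=
  ((eVerts F).image fun v =>
    (eVerts F).filter fun u =>
      (SimpleGraph.fromEdgeSet (↑F : Set (Sym2 V))).Reachable v u).card

/-- The function `h_d(F) = min{k(F), |V(F)| - (d+1)}`. -/
def hFun [Fintype V] [DecidableEq V] [DecidableEq C] (χ : V → Option C) (d : ℕ)
    (F : Finset (Sym2 V)) : ℤ :=
  min (kCount χ F) (((eVerts F).card : ℤ) - (d + 1))

/-- A vertex is colour-isolated if it is coloured and no other vertex has its colour. -/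
def ColourIsolated (χ : V → Option C) (v : V) : Prop :=
  ∃ c, χ v = some c ∧ ∀ u, u ≠ v → χ u ≠ some c


/-!
Both `k` and `|V(·)| - (d + 1)` are submodular, since `V(·)` and the colour set of `V(·)` turn
unions into unions. The minimum of two submodular functions `f, g` is again submodular as soon as
`g - f` is monotone, and `|V(F)| - k(F)` is monotone because each new vertex brings at most one new
colour.
-/

def IsSubmodular {α β : Type*} [Lattice α] [AddCommGroup β] [PartialOrder β] (f : α → β) :
    Prop :=
  ∀ X Y, f (X ⊔ Y) + f (X ⊓ Y) ≤ f X + f Y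

section Submodular

variable {α β : Type*} [Lattice α] [AddCommGroup β] [LinearOrder β] [IsOrderedAddMonoid β]

theorem IsSubmodular.add_const {f : α → β} (hf : IsSubmodular f) (c : β) :
    IsSubmodular fun X => f X + c := fun X Y => by
  rw [add_add_add_comm, add_add_add_comm (f X)]
  exact add_le_add_left (hf X Y) (c + c)

theorem IsSubmodular.min {f g : α → β} (hf : IsSubmodular f) (hg : IsSubmodular g)
    (hgf : Monotone (g - f)) : IsSubmodular fun X => min (f X) (g X) := fun X Y => by
  have mixed : ∀ X Y, f (X ⊔ Y) + g (X ⊓ Y) ≤ f X + g Y := fun X Y =>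
    calc f (X ⊔ Y) + g (X ⊓ Y) = f (X ⊔ Y) + f (X ⊓ Y) + (g - f) (X ⊓ Y) := by
          rw [Pi.sub_apply]; abel
      _ ≤ f X + f Y + (g - f) Y := add_le_add (hf X Y) (hgf inf_le_right)
      _ = f X + g Y := by rw [Pi.sub_apply]; abel
  dsimp only
  rcases min_cases (f X) (g X) with ⟨hmX, -⟩ | ⟨hmX, -⟩ <;>
    rcases min_cases (f Y) (g Y) with ⟨hmY, -⟩ | ⟨hmY, -⟩ <;> rw [hmX, hmY]
  · exact (add_le_add (min_le_left _ _) (min_le_left _ _)).trans (hf X Y)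
  · exact (add_le_add (min_le_left _ _) (min_le_right _ _)).trans (mixed X Y)
  · refine (add_le_add (min_le_left _ _) (min_le_right _ _)).trans ?_
    rw [sup_comm, inf_comm, add_comm (g X)]
    exact mixed Y X
  · exact (add_le_add (min_le_right _ _) (min_le_right _ _)).trans (hg X Y)

end Submodular

theorem SupHom.isSubmodular_card {α β : Type*} [Lattice α] [DecidableEq β]
    (φ : SupHom α (Finset β)) : IsSubmodular fun X => (#(φ X) : ℤ) := fun X Y => by
  have hinter : φ (X ⊓ Y) ⊆ φ X ∩ φ Y :=
    subset_inter (OrderHomClass.mono φ inf_le_left) (OrderHomClass.mono φ inf_le_right)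
  have := card_le_card hinter
  have := card_union_add_card_inter (φ X) (φ Y)
  dsimp only
  rw [map_sup, sup_eq_union]
  omega

theorem card_biUnion_toFinset_le {V C : Type*} [DecidableEq C] (χ : V → Option C)
    (S : Finset V) :
    #(S.biUnion fun v => (χ v).toFinset) ≤ #S :=
  card_biUnion_le.trans <|
    (sum_le_sum fun v _ => by cases χ v <;> simp).trans_eq (card_eq_sum_ones S).symm

theorem card_biUnion_toFinset_le_add_card_sdiff {V C : Type*} [DecidableEq V] [DecidableEq C]
    (χ : V → Option C) {S T : Finset V} (hST : S ⊆ T) :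
    #(T.biUnion fun v => (χ v).toFinset) ≤ #(S.biUnion fun v => (χ v).toFinset) + #(T \ S) := by
  conv_lhs => rw [← union_sdiff_of_subset hST, union_biUnion]
  exact (card_union_le _ _).trans (Nat.add_le_add_left (card_biUnion_toFinset_le χ _) _)

section EdgeSets

variable [Fintype V] [DecidableEq V] [DecidableEq C]

theorem eVerts_union (X Y : Finset (Sym2 V)) : eVerts (X ∪ Y) = eVerts X ∪ eVerts Y := by
  ext v
  simp only [eVerts, mem_filter, mem_union, mem_univ, true_and, or_and_right, exists_or]

theorem eVerts_mono : Monotone (eVerts (V := V)) := fun X Y hXY v hv => by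
  simp only [eVerts, mem_filter, mem_univ, true_and] at hv ⊢
  obtain ⟨e, he, hve⟩ := hv
  exact ⟨e, hXY he, hve⟩

theorem eCols_union (χ : V → Option C) (X Y : Finset (Sym2 V)) :
    eCols χ (X ∪ Y) = eCols χ X ∪ eCols χ Y := by
  simp only [eCols, eVerts_union, union_biUnion]

theorem isSubmodular_card_eVerts : IsSubmodular fun F : Finset (Sym2 V) => (#(eVerts F) : ℤ) :=
  SupHom.isSubmodular_card ⟨eVerts, eVerts_union⟩

theorem isSubmodular_kCount (χ : V → Option C) : IsSubmodular (kCount χ) :=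
  SupHom.isSubmodular_card ⟨eCols χ, eCols_union χ⟩

theorem monotone_card_eVerts_sub_kCount (χ : V → Option C) :
    Monotone fun F : Finset (Sym2 V) => (#(eVerts F) : ℤ) - kCount χ F := fun X Y hXY => by
  have hsub := eVerts_mono hXY
  have := card_biUnion_toFinset_le_add_card_sdiff χ hsub
  have := card_sdiff_of_subset hsub
  have := card_le_card hsub
  simp only [kCount, eCols]
  omega

end EdgeSets

theorem hFun_submodular_general {V C : Type*} [Fintype V] [DecidableEq V] [DecidableEq C]
    (χ : V → Option C) (d : ℕ) (X Y : Finset (Sym2 V)) :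
    hFun χ d (X ∪ Y) + hFun χ d (X ∩ Y) ≤ hFun χ d X + hFun χ d Y := by
  have hmono : Monotone fun F : Finset (Sym2 V) => ((#(eVerts F) : ℤ) - (d + 1)) - kCount χ F :=
    fun F F' h => by linarith [monotone_card_eVerts_sub_kCount χ h]
  exact (isSubmodular_kCount χ).min (isSubmodular_card_eVerts.add_const (-(d + 1 : ℤ))) hmono X Y

/-- `h_d` is submodular on edge subsets of `G`. -/
theorem hFun_submodular {V C : Type*} [Fintype V] [DecidableEq V] [DecidableEq C]
    (G : SimpleGraph V) (χ : V → Option C) (d : ℕ) (hd : 0 < d)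
    (X Y : Finset (Sym2 V)) (hXE : ∀ e ∈ X, e ∈ G.edgeSet) (hYE : ∀ e ∈ Y, e ∈ G.edgeSet) :
    hFun χ d (X ∪ Y) + hFun χ d (X ∩ Y) ≤ hFun χ d X + hFun χ d Y :=
  hFun_submodular_general χ d X Y
end
end

section
/- Let (G,χ) be a k-coloured graph on n vertices with edge set E such that |E| = n - 1 + min{k, n-2} and |F| ≤ (|V(F)| - ω(F)) + min{k(F), |V(F)| - 2} for every nonempty F ⊆ E, where ω(F) is the number of connected components of (V(F), F). Then G contains a vertex of degree at most two, or a colour-isolated vertex of degree three (a coloured vertex whose colour appears on no other vertex). -/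
open Finset

attribute [local instance] Classical.propDecidable

noncomputable section

variable {V C : Type*}

/-- a `g₁`-tight `k`-coloured graph contains a vertex of degree at most two
or a colour-isolated vertex of degree three. -/
theorem g1_tight_low_degree_vertex {V C : Type*} [Fintype V] [DecidableEq V] [DecidableEq C]
    (G : SimpleGraph V) (χ : V → Option C) (k : ℕ)
    (E : Finset (Sym2 V)) (hE : ∀ e, e ∈ E ↔ e ∈ G.edgeSet)
    (hk : (usedCols χ).card = k)
    (hcount : (E.card : ℤ) = (Fintype.card V : ℤ) - 1 + min (k : ℤ) ((Fintype.card V : ℤ) - 2))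
    (hsparse : ∀ F ⊆ E, F.Nonempty →
      (F.card : ℤ) ≤ (((eVerts F).card : ℤ) - omegaCount F)
        + min (kCount χ F) (((eVerts F).card : ℤ) - 2)) :
    (∃ v, G.degree v ≤ 2) ∨ ∃ v, ColourIsolated χ v ∧ G.degree v = 3 := by
  classical
  by_contra hcon
  push_neg at hcon
  obtain ⟨h1, h2⟩ := hcon
  set n := Fintype.card V with hn
  have hEedge : E = G.edgeFinset := by
    ext e; rw [SimpleGraph.mem_edgeFinset]; exact hE e
  have hhandshake : ∑ v, G.degree v = 2 * E.card := by
    rw [hEedge]; exact SimpleGraph.sum_degrees_eq_twice_card_edges G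
  set S := Finset.univ.filter (fun v => ColourIsolated χ v) with hS
  have hdeg : ∀ v : V, 3 + (if ColourIsolated χ v then 1 else 0) ≤ G.degree v := by
    intro v
    have h3 : 3 ≤ G.degree v := by have := h1 v; omega
    by_cases hv : ColourIsolated χ v
    · have := h2 v hv; simp only [hv, if_true]; omega
    · simp only [hv, if_false]; omega
  have hsum : 3 * n + S.card ≤ 2 * E.card := by
    rw [← hhandshake]
    calc 3 * n + S.card
        = ∑ _v : V, 3 + ∑ v : V, (if ColourIsolated χ v then 1 else 0) := by
          rw [Finset.sum_const, Finset.card_univ, ← Finset.card_filter]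
          simp only [smul_eq_mul]
          ring
      _ = ∑ v : V, (3 + if ColourIsolated χ v then 1 else 0) := by
          rw [← Finset.sum_add_distrib]
      _ ≤ ∑ v, G.degree v := Finset.sum_le_sum (fun v _ => hdeg v)
  -- counting lemma: 2 * k ≤ n + S.card
  have hcount2 : 2 * (usedCols χ).card ≤ n + S.card := by
    set U := usedCols χ with hU
    set Sing := U.filter (fun c => ∃ v, ColourIsolated χ v ∧ χ v = some c) with hSing
    have hSingS : Sing.card ≤ S.card := by
      have hsub : Sing ⊆ S.biUnion (fun v => (χ v).toFinset) := by
        intro c hc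
        rw [hSing, Finset.mem_filter] at hc
        obtain ⟨-, v, hv, hvc⟩ := hc
        exact Finset.mem_biUnion.2 ⟨v, by simp [hS, hv], by simp [hvc]⟩
      calc Sing.card ≤ _ := Finset.card_le_card hsub
        _ ≤ ∑ v ∈ S, (χ v).toFinset.card := Finset.card_biUnion_le
        _ ≤ ∑ _v ∈ S, 1 := Finset.sum_le_sum (fun v _ => by cases χ v <;> simp)
        _ = S.card := by simp
    have hfib : ∀ c ∈ U, 2 ≤ (Finset.univ.filter (fun v => χ v = some c)).card
        + (if c ∈ Sing then 1 else 0) := by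
      intro c hc
      obtain ⟨v, -, hv⟩ := Finset.mem_biUnion.1 hc
      rw [Option.mem_toFinset, Option.mem_def] at hv
      by_cases hcs : c ∈ Sing
      · have : v ∈ Finset.univ.filter (fun v => χ v = some c) := by
          simp [hv]
        have := Finset.card_pos.2 ⟨v, this⟩
        simp only [hcs, if_true]
        omega
      · have hvnotiso : ¬ ColourIsolated χ v := by
          intro hiso
          exact hcs (Finset.mem_filter.2 ⟨hc, v, hiso, hv⟩)
        have : ∃ u, u ≠ v ∧ χ u = some c := by
          by_contra hno
          push_neg at hno
          exact hvnotiso ⟨c, hv, fun u hu => hno u hu⟩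
        obtain ⟨u, huv, hu⟩ := this
        have h2le : 1 < (Finset.univ.filter (fun v => χ v = some c)).card := by
          rw [Finset.one_lt_card]
          exact ⟨u, by simp [hu], v, by simp [hv], huv⟩
        omega
    have hdisj : ∑ c ∈ U, (Finset.univ.filter (fun v => χ v = some c)).card ≤ n := by
      rw [← Finset.card_biUnion]
      · exact le_trans (Finset.card_le_card (Finset.subset_univ _)) (by simp [hn])
      · intro a ha b hb hab
        simp only [Finset.disjoint_left, Finset.mem_filter]
        rintro x ⟨-, hxa⟩ ⟨-, hxb⟩
        rw [hxa] at hxb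
        exact hab (Option.some_injective _ hxb)
    calc 2 * U.card = ∑ _c ∈ U, 2 := by rw [Finset.sum_const]; ring
      _ ≤ ∑ c ∈ U, ((Finset.univ.filter (fun v => χ v = some c)).card
            + (if c ∈ Sing then 1 else 0)) := Finset.sum_le_sum hfib
      _ = (∑ c ∈ U, (Finset.univ.filter (fun v => χ v = some c)).card)
            + Sing.card := by
          rw [Finset.sum_add_distrib]
          congr 1
          rw [hSing, Finset.card_filter]
          exact Finset.sum_congr rfl fun x hx => by
            simp only [Finset.mem_filter, hx, true_and]
      _ ≤ n + S.card := by omega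
  rw [hk] at hcount2
  have hmin : min (k : ℤ) ((n : ℤ) - 2) ≤ (k : ℤ) := min_le_left _ _
  have hE2 : (E.card : ℤ) ≤ (n : ℤ) - 1 + k := by rw [hcount]; linarith
  omega
end
end

section
/- If a monotone submodular integer-valued function f on subsets of a finite set E satisfies f(F) ≥ 1 for all nonempty F, then the family of subsets I ⊆ E satisfying |F| ≤ f(F) for all nonempty F ⊆ I forms the independent sets of a matroid on E. -/
open Finset

attribute [local instance] Classical.propDecidable

noncomputable section

/-- The independence condition induced by a count function `f`:
`I` is independent iff `|F| ≤ f(F)` for every nonempty `F ⊆ I`. -/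
def IndepBy {α : Type*} (f : Finset α → ℤ) (I : Finset α) : Prop :=
  ∀ F ⊆ I, F.Nonempty → (F.card : ℤ) ≤ f F

/-!
Fix an independent set `I` and call `T ⊆ I` tight if `f T ≤ |T|`. Submodularity makes the union
of two intersecting tight sets tight, so the maximal tight sets are pairwise disjoint. If `I + e`
is dependent, the violating set minus `e` is a tight set `A` with `f (A + e) = f A`, and
submodularity carries this over to the maximal tight set `T ⊇ A`. For independent `J`, the set
`S` of those `e ∈ J \ I` with `f (T + e) = f T` satisfies
`|S| + |T ∩ J| ≤ f (S ∪ (T ∩ J)) ≤ f (T ∪ S) = f T ≤ |T|`, i.e. `|S| ≤ |T \ J|`. If no element of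
`J \ I` augments `I`, summing over the maximal tight sets gives `|J \ I| ≤ |I \ J|`.
-/
section

variable {α : Type*} {E : Finset α} {f : Finset α → ℤ}

def SubmodularOn [DecidableEq α] (E : Finset α) (f : Finset α → ℤ) : Prop :=
  ∀ X Y : Finset α, X ⊆ E → Y ⊆ E → f (X ∪ Y) + f (X ∩ Y) ≤ f X + f Y

def IsTight (f : Finset α → ℤ) (I T : Finset α) : Prop :=
  T ⊆ I ∧ f T ≤ #T

namespace SubmodularOn

variable [DecidableEq α]

theorem insert_le_of_subset (hsub : SubmodularOn E f) {A B : Finset α} {e : α} (he : e ∈ E)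
    (hB : B ⊆ E) (hAB : A ⊆ B) (h : f (insert e A) ≤ f A) : f (insert e B) ≤ f B := by
  by_cases heB : e ∈ B
  · rw [insert_eq_of_mem heB]
  have hunion : B ∪ insert e A = insert e B := by
    rw [union_insert, union_eq_left.mpr hAB]
  have hinter : B ∩ insert e A = A := by
    rw [inter_insert_of_notMem heB, inter_eq_right.mpr hAB]
  have := hsub B (insert e A) hB (insert_subset he (hAB.trans hB))
  rw [hunion, hinter] at this
  linarith

theorem union_le (hsub : SubmodularOn E f) {T S : Finset α} (hT : T ⊆ E) (hS : S ⊆ E)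
    (h : ∀ e ∈ S, f (insert e T) ≤ f T) : f (T ∪ S) ≤ f T := by
  induction S using Finset.induction_on with
  | empty => simp
  | @insert a S _ ih =>
    have hS' : S ⊆ E := (subset_insert a S).trans hS
    calc f (T ∪ insert a S) = f (insert a (T ∪ S)) := by rw [union_insert]
      _ ≤ f (T ∪ S) :=
        hsub.insert_le_of_subset (hS (mem_insert_self a S)) (union_subset hT hS')
          subset_union_left (h a (mem_insert_self a S))
      _ ≤ f T := ih hS' fun e he => h e (mem_insert_of_mem he)

end SubmodularOn

namespace IsTight

variable {I T T' : Finset α}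

theorem exists_maximal_le (hT : IsTight f I T) :
    ∃ U, T ⊆ U ∧ Maximal (IsTight f I) U :=
  (I.powerset.finite_toSet.subset fun _ hU => mem_powerset.mpr hU.1).exists_le_maximal
    (s := {U | IsTight f I U}) hT

variable [DecidableEq α]

theorem union (hsub : SubmodularOn E f) (hIE : I ⊆ E) (hI : IndepBy f I)
    (hT : IsTight f I T) (hT' : IsTight f I T') (hne : (T ∩ T').Nonempty) :
    IsTight f I (T ∪ T') := by
  obtain ⟨hTI, hTf⟩ := hT
  obtain ⟨hT'I, hT'f⟩ := hT'
  refine ⟨union_subset hTI hT'I, ?_⟩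
  have hsubmod := hsub T T' (hTI.trans hIE) (hT'I.trans hIE)
  have hinter := hI (T ∩ T') (inter_subset_left.trans hTI) hne
  have hcard : ((#(T ∪ T') : ℕ) : ℤ) + #(T ∩ T') = #T + #T' := by
    exact_mod_cast card_union_add_card_inter T T'
  linarith

theorem disjoint_of_maximal (hsub : SubmodularOn E f) (hIE : I ⊆ E) (hI : IndepBy f I)
    (hT : Maximal (IsTight f I) T) (hT' : Maximal (IsTight f I) T') (hTT' : T ≠ T') :
    Disjoint T T' := by
  rw [disjoint_iff_inter_eq_empty, ← not_nonempty_iff_eq_empty]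
  intro hne
  have hunion := hT.prop.union hsub hIE hI hT'.prop hne
  have hT_eq : T = T ∪ T' := hT.eq_of_le hunion subset_union_left
  have hT'_eq : T' = T ∪ T' := hT'.eq_of_le hunion subset_union_right
  exact hTT' (hT_eq.trans hT'_eq.symm)

end IsTight

theorem IndepBy.exists_isTight_insert_le [DecidableEq α]
    (hmono : ∀ X Y : Finset α, X ⊆ Y → Y ⊆ E → f X ≤ f Y)
    (hpos : ∀ F ⊆ E, F.Nonempty → 1 ≤ f F) {I : Finset α} {e : α} (hIE : I ⊆ E) (he : e ∈ E)
    (hI : IndepBy f I) (hdep : ¬ IndepBy f (insert e I)) :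
    ∃ T, IsTight f I T ∧ f (insert e T) ≤ f T := by
  simp only [IndepBy, not_forall, not_le, exists_prop] at hdep
  obtain ⟨F, hFsub, hFne, hFf⟩ := hdep
  have hFE : F ⊆ E := hFsub.trans (insert_subset he hIE)
  have heF : e ∈ F := by
    by_contra heF
    exact (hI F ((subset_insert_iff_of_notMem heF).mp hFsub) hFne).not_gt hFf
  have hF : insert e (F.erase e) = F := insert_erase heF
  have hAI : F.erase e ⊆ I := (erase_subset_erase e hFsub).trans (erase_insert_subset e I)
  have hAne : (F.erase e).Nonempty := by
    by_contra hA
    rw [not_nonempty_iff_eq_empty.mp hA, insert_empty] at hF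
    subst hF
    have := hpos {e} hFE hFne
    rw [card_singleton] at hFf
    omega
  have hAf : f F ≤ #(F.erase e) := by
    have hcard : #F = #(F.erase e) + 1 := (card_erase_add_one heF).symm
    omega
  have hAF : f (F.erase e) ≤ f F := hmono _ _ (erase_subset e F) hFE
  refine ⟨F.erase e, ⟨hAI, hAF.trans hAf⟩, ?_⟩
  rw [hF]
  linarith [hI _ hAI hAne]

theorem IndepBy.card_le_card_sdiff_of_insert_le [DecidableEq α]
    (hmono : ∀ X Y : Finset α, X ⊆ Y → Y ⊆ E → f X ≤ f Y) (hsub : SubmodularOn E f)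
    {J T S : Finset α} (hJE : J ⊆ E) (hJ : IndepBy f J) (hTE : T ⊆ E) (hTf : f T ≤ #T)
    (hSJ : S ⊆ J) (hST : Disjoint S T) (hspan : ∀ e ∈ S, f (insert e T) ≤ f T) :
    #S ≤ #(T \ J) := by
  rcases S.eq_empty_or_nonempty with rfl | hSne
  · simp
  have hSE : S ⊆ E := hSJ.trans hJE
  have hdisj : Disjoint S (T ∩ J) := hST.mono_right inter_subset_left
  have hspanned : f (T ∪ S) ≤ f T := hsub.union_le hTE hSE hspan
  have hle : f (S ∪ (T ∩ J)) ≤ f (T ∪ S) :=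
    hmono _ _ (union_subset subset_union_right (inter_subset_left.trans subset_union_left))
      (union_subset hTE hSE)
  have hindep := hJ (S ∪ (T ∩ J)) (union_subset hSJ inter_subset_right)
    (hSne.mono subset_union_left)
  rw [card_union_of_disjoint hdisj] at hindep
  have hT := card_inter_add_card_sdiff T J
  push_cast at hindep
  omega

theorem IndepBy.exists_insert_of_card_lt [DecidableEq α]
    (hmono : ∀ X Y : Finset α, X ⊆ Y → Y ⊆ E → f X ≤ f Y) (hsub : SubmodularOn E f)
    (hpos : ∀ F ⊆ E, F.Nonempty → 1 ≤ f F) {I J : Finset α} (hIE : I ⊆ E) (hJE : J ⊆ E)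
    (hI : IndepBy f I) (hJ : IndepBy f J) (hlt : #I < #J) :
    ∃ e ∈ J \ I, IndepBy f (insert e I) := by
  by_contra! hdep
  let 𝒯 := I.powerset.filter (Maximal (IsTight f I))
  let S (T : Finset α) := (J \ I).filter fun e => f (insert e T) ≤ f T
  have hmax {T} (hT : T ∈ 𝒯) : Maximal (IsTight f I) T := (mem_filter.mp hT).2
  have hcover : J \ I ⊆ 𝒯.biUnion S := by
    intro e he
    have heE : e ∈ E := hJE (mem_sdiff.mp he).1
    obtain ⟨A, hA, hAe⟩ := hI.exists_isTight_insert_le hmono hpos hIE heE (hdep e he)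
    obtain ⟨T, hAT, hT⟩ := hA.exists_maximal_le
    refine mem_biUnion.mpr ⟨T, mem_filter.mpr ⟨mem_powerset.mpr hT.prop.1, hT⟩, ?_⟩
    exact mem_filter.mpr ⟨he, hsub.insert_le_of_subset heE (hT.prop.1.trans hIE) hAT hAe⟩
  have hdisj : (𝒯 : Set (Finset α)).PairwiseDisjoint (· \ J) := fun T hT T' hT' hne =>
    (IsTight.disjoint_of_maximal hsub hIE hI (hmax hT) (hmax hT') hne).mono
      sdiff_subset sdiff_subset
  have hS_le {T} (hT : T ∈ 𝒯) : #(S T) ≤ #(T \ J) := by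
    have hTI := (hmax hT).prop.1
    refine hJ.card_le_card_sdiff_of_insert_le hmono hsub hJE (hTI.trans hIE) (hmax hT).prop.2
      (filter_subset _ _ |>.trans sdiff_subset) ?_ fun e he => (mem_filter.mp he).2
    exact (disjoint_sdiff_self_left.mono_right hTI).mono_left (filter_subset _ _)
  have hcard : #(J \ I) ≤ #(I \ J) := calc
    #(J \ I) ≤ #(𝒯.biUnion S) := card_le_card hcover
    _ ≤ ∑ T ∈ 𝒯, #(S T) := card_biUnion_le
    _ ≤ ∑ T ∈ 𝒯, #(T \ J) := sum_le_sum fun T hT => hS_le hT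
    _ = #(𝒯.biUnion (· \ J)) := (card_biUnion hdisj).symm
    _ ≤ #(I \ J) := card_le_card <| biUnion_subset.mpr fun T hT =>
      sdiff_subset_sdiff (hmax hT).prop.1 subset_rfl
  exact hlt.not_ge (card_sdiff_le_card_sdiff_iff.mp hcard)

end

/-- a monotone submodular integer-valued function `f` with `f(F) ≥ 1` for
all nonempty `F` induces a matroid on `E`: the sets `I ⊆ E` with `|F| ≤ f(F)` for all
nonempty `F ⊆ I` satisfy the independence axioms (empty set, hereditary, augmentation). -/
theorem induced_matroid_axioms {α : Type*} [DecidableEq α] (E : Finset α)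
    (f : Finset α → ℤ)
    (hmono : ∀ X Y : Finset α, X ⊆ Y → Y ⊆ E → f X ≤ f Y)
    (hsub : ∀ X Y : Finset α, X ⊆ E → Y ⊆ E → f (X ∪ Y) + f (X ∩ Y) ≤ f X + f Y)
    (hpos : ∀ F ⊆ E, F.Nonempty → 1 ≤ f F) :
    IndepBy f (∅ : Finset α) ∧
    (∀ I J : Finset α, J ⊆ E → IndepBy f J → I ⊆ J → IndepBy f I) ∧
    (∀ I J : Finset α, I ⊆ E → J ⊆ E → IndepBy f I → IndepBy f J → I.card < J.card →
      ∃ e ∈ J \ I, IndepBy f (insert e I)) :=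
  ⟨fun _ hF hne => absurd (subset_empty.mp hF ▸ hne) Finset.not_nonempty_empty,
    fun _ _ _ hJ hIJ F hF => hJ F (hF.trans hIJ),
    fun _ _ hIE hJE hI hJ hlt => hI.exists_insert_of_card_lt hmono hsub hpos hIE hJE hJ hlt⟩
end
end

section
/- Suppose (G,χ) is a k-coloured graph on n vertices with k < n - 2, every vertex has degree at least 3, and 2|E| = 2n - 2 + 2k (the g_1-tight edge count when k < n-2). If no vertex of degree exactly 3 is colour-isolated, then a contradiction follows; hence some colour-isolated vertex of degree three exists whenever every vertex has degree at least three. -/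
/-!
Double counting. As every degree is at least `3`, `2|E| ≥ 4n - n₃`. A colour class that is not a
single colour-isolated vertex has at least two vertices, so `2k ≤ n + k₁`. If no vertex of degree
`3` were colour-isolated, then `k₁ + n₃ ≤ n`, and `2|E| = 2n - 2 + 2k ≤ 4n - n₃ - 2`.
-/

open Finset

attribute [local instance] Classical.propDecidable

noncomputable section

variable {V C : Type*}

theorem succ_mul_card_le_sum_degree_add_card_degree_eq {V : Type*} [Fintype V] (G : SimpleGraph V)
    (d : ℕ) (hdeg : ∀ v, d ≤ G.degree v) :
    (d + 1) * Fintype.card V ≤ ∑ v, G.degree v + #{v | G.degree v = d} := by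
  rw [card_filter, ← sum_add_distrib, ← card_univ, mul_comm, ← smul_eq_mul, ← sum_const]
  refine sum_le_sum fun v _ => ?_
  have := hdeg v
  split_ifs <;> omega

theorem sum_card_colour_fibre_le {V C : Type*} [DecidableEq C] (χ : V → Option C) (s : Finset V)
    (T : Finset C) : ∑ c ∈ T, #{v ∈ s | χ v = some c} ≤ #s := by
  rw [← sum_image (f := fun j => #{v ∈ s | χ v = j}) fun _ _ _ _ h => Option.some_injective C h,
    sum_card_fiberwise_eq_card_filter]
  exact card_filter_le _ _

theorem mem_usedCols_iff {V C : Type*} [Fintype V] [DecidableEq C] (χ : V → Option C) (c : C) :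
    c ∈ usedCols χ ↔ ∃ v, χ v = some c := by
  simp [usedCols]

/-- Either the class of `c` has two vertices, or its only vertex is colour-isolated and counted
twice. -/
theorem two_le_card_colour_fibre_add_card_isolated {V C : Type*} [Fintype V] [DecidableEq C]
    (χ : V → Option C) {c : C} (hc : ∃ v, χ v = some c) :
    2 ≤ #{v | χ v = some c} + #{v ∈ univ.filter (ColourIsolated χ) | χ v = some c} := by
  obtain ⟨v, hv⟩ := hc
  by_cases hshared : ∃ u, u ≠ v ∧ χ u = some c
  · obtain ⟨u, huv, hu⟩ := hshared
    have hpair : ({u, v} : Finset V) ⊆ univ.filter (χ · = some c) := by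
      intro w hw
      rcases mem_insert.mp hw with rfl | hw
      · simpa using hu
      · simpa [mem_singleton.mp hw] using hv
    have := card_le_card hpair
    rw [card_pair huv] at this
    omega
  · push Not at hshared
    have hiso : ColourIsolated χ v := ⟨c, hv, hshared⟩
    have h₁ : 0 < #{v | χ v = some c} := card_pos.mpr ⟨v, by simpa using hv⟩
    have h₂ : 0 < #{v ∈ univ.filter (ColourIsolated χ) | χ v = some c} :=
      card_pos.mpr ⟨v, by simpa using ⟨hiso, hv⟩⟩
    omega

theorem two_mul_card_usedCols_le {V C : Type*} [Fintype V] [DecidableEq C] (χ : V → Option C) :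
    2 * #(usedCols χ) ≤ Fintype.card V + #(univ.filter (ColourIsolated χ)) :=
  calc 2 * #(usedCols χ)
      ≤ ∑ c ∈ usedCols χ,
          (#{v | χ v = some c} + #{v ∈ univ.filter (ColourIsolated χ) | χ v = some c}) := by
        rw [mul_comm, ← smul_eq_mul, ← sum_const]
        exact sum_le_sum fun c hc =>
          two_le_card_colour_fibre_add_card_isolated χ ((mem_usedCols_iff χ c).mp hc)
    _ ≤ Fintype.card V + #(univ.filter (ColourIsolated χ)) := by
        rw [sum_add_distrib, ← card_univ]
        exact add_le_add (sum_card_colour_fibre_le χ _ _) (sum_card_colour_fibre_le χ _ _)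

theorem colour_isolated_degree_three_general {V C : Type*} [Fintype V] [DecidableEq C]
    (G : SimpleGraph V) (χ : V → Option C) (k : ℕ)
    (E : Finset (Sym2 V)) (hE : ∀ e, e ∈ E ↔ e ∈ G.edgeSet)
    (hk : (usedCols χ).card = k)
    (hdeg : ∀ v, 3 ≤ G.degree v)
    (hcount : 2 * (E.card : ℤ) = 2 * (Fintype.card V : ℤ) - 2 + 2 * (k : ℤ)) :
    ∃ v, ColourIsolated χ v ∧ G.degree v = 3 := by
  by_contra! hnone
  have hEdges : E = G.edgeFinset := by ext e; simpa using hE e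
  have hdegsum := G.sum_degrees_eq_twice_card_edges
  have hdegree := succ_mul_card_le_sum_degree_add_card_degree_eq G 3 hdeg
  have hcolours := two_mul_card_usedCols_le χ
  have hdisjoint :
      #(univ.filter (ColourIsolated χ)) + #{v | G.degree v = 3} ≤ Fintype.card V := by
    rw [← card_union_of_disjoint (disjoint_filter.mpr fun v _ hiso => hnone v hiso)]
    exact card_le_univ _
  subst hEdges hk
  omega

/-- in a `k`-coloured graph with `k < n - 2`, minimum degree at least 3 and
`2|E| = 2n - 2 + 2k`, some colour-isolated vertex of degree three exists. -/
theorem colour_isolated_degree_three {V C : Type*} [Fintype V] [DecidableEq V] [DecidableEq C]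
    (G : SimpleGraph V) (χ : V → Option C) (k : ℕ)
    (E : Finset (Sym2 V)) (hE : ∀ e, e ∈ E ↔ e ∈ G.edgeSet)
    (hk : (usedCols χ).card = k)
    (hkn : (k : ℤ) < (Fintype.card V : ℤ) - 2)
    (hdeg : ∀ v, 3 ≤ G.degree v)
    (hcount : 2 * (E.card : ℤ) = 2 * (Fintype.card V : ℤ) - 2 + 2 * (k : ℤ)) :
    ∃ v, ColourIsolated χ v ∧ G.degree v = 3 :=
  colour_isolated_degree_three_general G χ k E hE hk hdeg hcount
end
end

section
/- Let S(G,p) be the n × (d+1)n block-diagonal matrix whose i-th row has p(i)ᵀ in the i-th block of d+1 columns and zeros elsewhere, where each p(i) ∈ ℝ^{d+1} is nonzero. Then the map sending ṗ in the kernel of the stacked matrix [R(G,p); S(G,p)] to q̇ defined by q̇(i) = ṗ(i)/‖p(i)‖ is a linear bijection onto the kernel of [R(G,p̄); S(G,p̄)], where p̄(i) = p(i)/‖p(i)‖; in particular the two kernels have equal dimension. -/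
/-!
Rescaling every velocity `ṗ(i)` by the same nonzero factor `c i` as its point `p(i)` preserves
the tangency conditions `⟪p i, ṗ i⟫ = 0` outright. Given tangency at both endpoints, the edge
condition `⟪p u - p v, ṗ u - ṗ v⟫ = 0` is equivalent to `⟪p u, ṗ v⟫ + ⟪p v, ṗ u⟫ = 0`, which
only picks up the factor `c u * c v`. So rescaling maps the kernel at `p` into the kernel at
`c • p`, and rescaling back by `c⁻¹` is its inverse; `c i = ‖p i‖⁻¹` is central projection.
-/

open RealInnerProductSpace

section

variable {V E : Type*} [NormedAddCommGroup E] [InnerProductSpace ℝ E]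

theorem inner_smul_sub_smul_eq_zero {a b x y : E} (ha : ⟪a, x⟫ = 0) (hb : ⟪b, y⟫ = 0)
    (h : ⟪a - b, x - y⟫ = 0) (s t : ℝ) : ⟪s • a - t • b, s • x - t • y⟫ = 0 := by
  simp only [inner_sub_left, inner_sub_right, real_inner_smul_left, real_inner_smul_right]
    at h ⊢
  linear_combination s * t * h + (s ^ 2 - s * t) * ha + (t ^ 2 - s * t) * hb

/-- The kernel of `[R(G,p); S(G,p)]`. -/
def IsSphericalMotion (G : SimpleGraph V) (p pdot : V → E) : Prop :=
  (∀ u v, G.Adj u v → ⟪p u - p v, pdot u - pdot v⟫ = 0) ∧ ∀ i, ⟪p i, pdot i⟫ = 0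

theorem IsSphericalMotion.smul {G : SimpleGraph V} {p pdot : V → E}
    (hm : IsSphericalMotion G p pdot) (c : V → ℝ) :
    IsSphericalMotion G (fun i => c i • p i) (fun i => c i • pdot i) := by
  obtain ⟨hedge, htangent⟩ := hm
  refine ⟨fun u v huv => inner_smul_sub_smul_eq_zero (htangent u) (htangent v)
    (hedge u v huv) (c u) (c v), fun i => ?_⟩
  rw [real_inner_smul_left, real_inner_smul_right, htangent i, mul_zero, mul_zero]

theorem bijOn_rescale_setOf_isSphericalMotion (G : SimpleGraph V) (p : V → E) {c : V → ℝ}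
    (hc : ∀ i, c i ≠ 0) :
    Set.BijOn (fun pdot : V → E => fun i => c i • pdot i)
      {pdot | IsSphericalMotion G p pdot}
      {qdot | IsSphericalMotion G (fun i => c i • p i) qdot} := by
  have hp : (fun i => (c i)⁻¹ • c i • p i) = p := funext fun i => inv_smul_smul₀ (hc i) (p i)
  refine Set.InvOn.bijOn (f' := fun qdot i => (c i)⁻¹ • qdot i)
    ⟨fun pdot _ => funext fun i => inv_smul_smul₀ (hc i) _,
      fun qdot _ => funext fun i => smul_inv_smul₀ (hc i) _⟩
    (fun pdot hm => hm.smul c) (fun qdot hm => hp ▸ hm.smul fun i => (c i)⁻¹)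

end

theorem kernel_bijection_central_projection_general {V : Type*} (d : ℕ)
    (G : SimpleGraph V) (p : V → EuclideanSpace ℝ (Fin (d + 1))) (hp : ∀ i, p i ≠ 0) :
    IsLinearMap ℝ
      (fun pdot : V → EuclideanSpace ℝ (Fin (d + 1)) => fun i => ‖p i‖⁻¹ • pdot i) ∧
    Set.BijOn
      (fun pdot : V → EuclideanSpace ℝ (Fin (d + 1)) => fun i => ‖p i‖⁻¹ • pdot i)
      {pdot : V → EuclideanSpace ℝ (Fin (d + 1)) |
        (∀ u v, G.Adj u v → (inner ℝ (p u - p v) (pdot u - pdot v) : ℝ) = 0) ∧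
        ∀ i, (inner ℝ (p i) (pdot i) : ℝ) = 0}
      {qdot : V → EuclideanSpace ℝ (Fin (d + 1)) |
        (∀ u v, G.Adj u v →
          (inner ℝ ((‖p u‖⁻¹ • p u) - (‖p v‖⁻¹ • p v)) (qdot u - qdot v) : ℝ) = 0) ∧
        ∀ i, (inner ℝ (‖p i‖⁻¹ • p i) (qdot i) : ℝ) = 0} :=
  ⟨⟨fun x y => funext fun i => smul_add _ (x i) (y i),
      fun a x => funext fun i => smul_comm _ a (x i)⟩,
    bijOn_rescale_setOf_isSphericalMotion G p fun i => inv_ne_zero (norm_ne_zero_iff.mpr (hp i))⟩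

/-- rescaling `ṗ(i) ↦ ṗ(i)/‖p(i)‖` is a linear bijection from the kernel
of `[R(G,p); S(G,p)]` onto the kernel of `[R(G,p̄); S(G,p̄)]`, where `p̄(i) = p(i)/‖p(i)‖`;
in particular the two kernels have equal dimension. -/
theorem kernel_bijection_central_projection {V : Type*} [Fintype V] (d : ℕ)
    (G : SimpleGraph V) (p : V → EuclideanSpace ℝ (Fin (d + 1))) (hp : ∀ i, p i ≠ 0) :
    IsLinearMap ℝ
      (fun pdot : V → EuclideanSpace ℝ (Fin (d + 1)) => fun i => ‖p i‖⁻¹ • pdot i) ∧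
    Set.BijOn
      (fun pdot : V → EuclideanSpace ℝ (Fin (d + 1)) => fun i => ‖p i‖⁻¹ • pdot i)
      {pdot : V → EuclideanSpace ℝ (Fin (d + 1)) |
        (∀ u v, G.Adj u v → (inner ℝ (p u - p v) (pdot u - pdot v) : ℝ) = 0) ∧
        ∀ i, (inner ℝ (p i) (pdot i) : ℝ) = 0}
      {qdot : V → EuclideanSpace ℝ (Fin (d + 1)) |
        (∀ u v, G.Adj u v →
          (inner ℝ ((‖p u‖⁻¹ • p u) - (‖p v‖⁻¹ • p v)) (qdot u - qdot v) : ℝ) = 0) ∧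
        ∀ i, (inner ℝ (‖p i‖⁻¹ • p i) (qdot i) : ℝ) = 0} :=
  kernel_bijection_central_projection_general d G p hp
end

section
/- Let F₁ and F₂ be edge sets in an f-sparse coloured graph (f = r + k with r a matroid rank function and k the colour count), both attaining equality |Fᵢ| = f(Fᵢ), with F₁ ∩ F₂ ≠ ∅. Then |F₁ ∩ F₂| = f(F₁ ∩ F₂) and k(F₁) + k(F₂) = k(F₁ ∪ F₂) + k(F₁ ∩ F₂); moreover every colour common to V(F₁) and V(F₂) appears on V(F₁ ∩ F₂). -/
open Finset

attribute [local instance] Classical.propDecidable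

noncomputable section

variable {V C : Type*}

lemma eVerts_union_eq [Fintype V] [DecidableEq V] (F₁ F₂ : Finset (Sym2 V)) :
    eVerts (F₁ ∪ F₂) = eVerts F₁ ∪ eVerts F₂ := by
  ext v
  simp only [eVerts, Finset.mem_filter, Finset.mem_union, Finset.mem_univ, true_and]
  aesop

lemma eVerts_mono_s19 [Fintype V] [DecidableEq V] {F₁ F₂ : Finset (Sym2 V)} (h : F₁ ⊆ F₂) :
    eVerts F₁ ⊆ eVerts F₂ := by
  intro v hv
  simp only [eVerts, Finset.mem_filter, Finset.mem_univ, true_and] at hv ⊢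
  obtain ⟨e, he, hv⟩ := hv
  exact ⟨e, h he, hv⟩

lemma eCols_union_eq [Fintype V] [DecidableEq V] [DecidableEq C] (χ : V → Option C)
    (F₁ F₂ : Finset (Sym2 V)) :
    eCols χ (F₁ ∪ F₂) = eCols χ F₁ ∪ eCols χ F₂ := by
  unfold eCols
  rw [eVerts_union_eq]
  ext c
  simp only [Finset.mem_biUnion, Finset.mem_union]
  aesop

lemma eCols_mono [Fintype V] [DecidableEq V] [DecidableEq C] (χ : V → Option C)
    {F₁ F₂ : Finset (Sym2 V)} (h : F₁ ⊆ F₂) :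
    eCols χ F₁ ⊆ eCols χ F₂ :=
  Finset.biUnion_subset_biUnion_of_subset_left _ (eVerts_mono_s19 h)

/-- in an `f`-sparse coloured graph (`f = r + k`), if `F₁, F₂` both attain
equality `|Fᵢ| = f(Fᵢ)` and `F₁ ∩ F₂ ≠ ∅`, then `|F₁ ∩ F₂| = f(F₁ ∩ F₂)`,
`k(F₁) + k(F₂) = k(F₁ ∪ F₂) + k(F₁ ∩ F₂)`, and every colour common to `V(F₁)` and
`V(F₂)` appears on `V(F₁ ∩ F₂)`. -/
theorem tight_intersection {V C : Type*} [Fintype V] [DecidableEq V] [DecidableEq C]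
    (G : SimpleGraph V) (χ : V → Option C)
    (r : Finset (Sym2 V) → ℤ)
    (hnonneg : ∀ F, 0 ≤ r F)
    (hmono : ∀ X Y : Finset (Sym2 V), X ⊆ Y → r X ≤ r Y)
    (hsub : ∀ X Y : Finset (Sym2 V), r (X ∪ Y) + r (X ∩ Y) ≤ r X + r Y)
    (E : Finset (Sym2 V)) (hE : ∀ e, e ∈ E ↔ e ∈ G.edgeSet)
    (hsparse : ∀ F ⊆ E, (F.card : ℤ) ≤ r F + kCount χ F)
    (F₁ F₂ : Finset (Sym2 V)) (hF₁ : F₁ ⊆ E) (hF₂ : F₂ ⊆ E)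
    (ht₁ : (F₁.card : ℤ) = r F₁ + kCount χ F₁)
    (ht₂ : (F₂.card : ℤ) = r F₂ + kCount χ F₂)
    (hint : (F₁ ∩ F₂).Nonempty) :
    ((F₁ ∩ F₂).card : ℤ) = r (F₁ ∩ F₂) + kCount χ (F₁ ∩ F₂) ∧
    kCount χ F₁ + kCount χ F₂ = kCount χ (F₁ ∪ F₂) + kCount χ (F₁ ∩ F₂) ∧
    eCols χ F₁ ∩ eCols χ F₂ ⊆ eCols χ (F₁ ∩ F₂) := by
  classical
  have hU : F₁ ∪ F₂ ⊆ E := Finset.union_subset hF₁ hF₂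
  have hI : F₁ ∩ F₂ ⊆ E := Finset.Subset.trans (Finset.inter_subset_left) hF₁
  have hsU := hsparse _ hU
  have hsI := hsparse _ hI
  have hcard : ((F₁ ∪ F₂).card : ℤ) + ((F₁ ∩ F₂).card : ℤ) = (F₁.card : ℤ) + F₂.card := by
    exact_mod_cast Finset.card_union_add_card_inter F₁ F₂
  have hsubr := hsub F₁ F₂
  have hIsub : eCols χ (F₁ ∩ F₂) ⊆ eCols χ F₁ ∩ eCols χ F₂ :=
    Finset.subset_inter (eCols_mono χ Finset.inter_subset_left)
      (eCols_mono χ Finset.inter_subset_right)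
  have hkU : kCount χ (F₁ ∪ F₂) + ((eCols χ F₁ ∩ eCols χ F₂).card : ℤ)
      = kCount χ F₁ + kCount χ F₂ := by
    unfold kCount
    rw [eCols_union_eq]
    exact_mod_cast Finset.card_union_add_card_inter _ _
  have hkI : kCount χ (F₁ ∩ F₂) ≤ ((eCols χ F₁ ∩ eCols χ F₂).card : ℤ) := by
    unfold kCount
    exact_mod_cast Finset.card_le_card hIsub
  refine ⟨by linarith, by linarith, ?_⟩
  have hcardeq : (eCols χ F₁ ∩ eCols χ F₂).card ≤ (eCols χ (F₁ ∩ F₂)).card := by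
    have : ((eCols χ F₁ ∩ eCols χ F₂).card : ℤ) = kCount χ (F₁ ∩ F₂) := by linarith
    unfold kCount at this
    exact_mod_cast le_of_eq this
  rw [← Finset.eq_of_subset_of_card_le hIsub hcardeq]
end
end
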